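/- arXiv:2507.23423 — 3 statements merged into one kernel-verified Lean document; each statement's English description precedes it below -/
import Mathlib

section
/- Let g be an M♮-convex function with finite nonempty effective domain and let b : E → {0,1}. Then for every integer k with k̲ ≤ k ≤ k̄, the set 𝒯_k is nonempty. -/
open scoped BigOperators

/-- Characteristic vector of a singleton `{u}`. -/
def chiv {E : Type*} [DecidableEq E] (u : E) : E → ℤ := fun e => if e = u then 1 else 0

/-- Characteristic vector allowing the dummy symbol `z` (modelled as `none`), with `χ_z = 0`. -/
def chiOpt {E : Type*} [DecidableEq E] (v : Option E) : E → ℤ :=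
  fun e => match v with
  | none => 0
  | some w => chiv w e

/-- M♮-convexity (with nonempty effective domain) for `g : (E → ℤ) → ℝ ∪ {+∞}`. -/
def MnatConvex {E : Type*} [DecidableEq E] (g : (E → ℤ) → WithTop ℝ) : Prop :=
  (∃ x, g x < ⊤) ∧
  ∀ x y : E → ℤ, g x < ⊤ → g y < ⊤ → ∀ u : E, y u < x u →
    (g (x - chiv u) + g (y + chiv u) ≤ g x + g y) ∨
    (∃ v : E, x v < y v ∧
      g (x - chiv u + chiv v) + g (y + chiv u - chiv v) ≤ g x + g y)

/-- `⟨b,x⟩ = ∑ e, b e * x e`. -/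
def innerb {E : Type*} [Fintype E] (b : E → ℤ) (x : E → ℤ) : ℤ := ∑ e, b e * x e

/-- `𝒯_i`: the minimizers of `g` on `𝒫_i = {x ∈ dom g : ⟨b,x⟩ = i}`. -/
def Tset {E : Type*} [Fintype E] (g : (E → ℤ) → WithTop ℝ) (b : E → ℤ) (i : ℤ) :
    Set (E → ℤ) :=
  {x | g x < ⊤ ∧ innerb b x = i ∧ ∀ y : E → ℤ, g y < ⊤ → innerb b y = i → g x ≤ g y}

/-- A transition `(u,v)` with respect to `x`: `u ∈ E₁`, `v ∈ E₀ ∪ {z}`, and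
`x - χ_u + χ_v ∈ dom g`. -/
def IsTransition {E : Type*} [DecidableEq E] (g : (E → ℤ) → WithTop ℝ) (b : E → ℤ)
    (x : E → ℤ) (u : E) (v : Option E) : Prop :=
  b u = 1 ∧ (∀ w : E, v = some w → b w = 0) ∧ g (x - chiv u + chiOpt v) < ⊤

/-- The cost `g(x;u,v) = g(x - χ_u + χ_v) - g(x)` of a transition (as a real number;
both values are finite for transitions with respect to `x ∈ dom g`). -/
noncomputable def transCost {E : Type*} [DecidableEq E] (g : (E → ℤ) → WithTop ℝ)
    (x : E → ℤ) (u : E) (v : Option E) : ℝ :=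
  WithTop.untopD 0 (g (x - chiv u + chiOpt v)) - WithTop.untopD 0 (g x)

/-- A minimum transition with respect to `x`. -/
def IsMinTransition {E : Type*} [Fintype E] [DecidableEq E] (g : (E → ℤ) → WithTop ℝ)
    (b : E → ℤ) (x : E → ℤ) (u : E) (v : Option E) : Prop :=
  IsTransition g b x u v ∧
    ∀ (u' : E) (v' : Option E), IsTransition g b x u' v' →
      transCost g x u v ≤ transCost g x u' v'


/-! Applying the exchange axiom to `y, x` at a coordinate `u ∈ E₁` with `x u < y u` moves `x`
one step closer to `y` in ℓ¹ while raising `⟨b, x⟩` by `1 - b v ∈ {0, 1}`. Hence the levels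
`⟨b, ·⟩` attained on `dom g` form an integer interval, and on each attained level the finite set
`𝒫_k` contains a minimizer of `g`. -/

open Finset

lemma chiv_nonneg {E : Type*} [DecidableEq E] (u e : E) : 0 ≤ chiv u e := by
  unfold chiv; split_ifs <;> simp

section IntVectors

variable {E : Type*} [Fintype E]

lemma innerb_add (b x y : E → ℤ) : innerb b (x + y) = innerb b x + innerb b y := by
  simp only [innerb, Pi.add_apply, mul_add, sum_add_distrib]

lemma innerb_sub (b x y : E → ℤ) : innerb b (x - y) = innerb b x - innerb b y := by
  simp only [innerb, Pi.sub_apply, mul_sub, sum_sub_distrib]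

variable [DecidableEq E]

@[simp]
lemma innerb_chiv (b : E → ℤ) (u : E) : innerb b (chiv u) = b u := by
  simp [innerb, chiv]

def l1dist (x y : E → ℤ) : ℕ := ∑ e, (x e - y e).natAbs

lemma l1dist_add_chiv_lt {x y : E → ℤ} {u : E} (h : x u < y u) :
    l1dist (x + chiv u) y < l1dist x y := by
  refine sum_lt_sum (fun e _ => ?_) ⟨u, mem_univ u, ?_⟩
  · by_cases he : e = u <;> simp [chiv, he]; omega
  · simp [chiv]; omega

lemma l1dist_sub_chiv_lt {x y : E → ℤ} {v : E} (h : y v < x v) :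
    l1dist (x - chiv v) y < l1dist x y := by
  refine sum_lt_sum (fun e _ => ?_) ⟨v, mem_univ v, ?_⟩
  · by_cases he : e = v <;> simp [chiv, he]; omega
  · simp [chiv]; omega

end IntVectors

namespace MnatConvex

variable {E : Type*} [Fintype E] [DecidableEq E] {g : (E → ℤ) → WithTop ℝ} {b : E → ℤ}

lemma exists_step_toward (hg : MnatConvex g) (hb : ∀ e, b e = 0 ∨ b e = 1) {x y : E → ℤ}
    (hx : g x < ⊤) (hy : g y < ⊤) (hlt : innerb b x < innerb b y) :
    ∃ x', g x' < ⊤ ∧ innerb b x ≤ innerb b x' ∧ innerb b x' ≤ innerb b x + 1 ∧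
      l1dist x' y < l1dist x y := by
  obtain ⟨u, -, hu⟩ := exists_lt_of_sum_lt hlt
  have hbu : b u = 1 := (hb u).resolve_left fun h => by simp [h] at hu
  have hxu : x u < y u := by simpa [hbu] using hu
  have finite_of_le {a c : WithTop ℝ} (h : a + c ≤ g y + g x) : c < ⊤ :=
    (WithTop.add_lt_top.1 (h.trans_lt (WithTop.add_lt_top.2 ⟨hy, hx⟩))).2
  rcases hg.2 y x hy hx u hxu with hexch | ⟨v, hv, hexch⟩
  · refine ⟨x + chiv u, finite_of_le hexch, ?_, ?_, l1dist_add_chiv_lt hxu⟩ <;>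
      simp [innerb_add, hbu]
  · have hbv : b v = 0 ∨ b v = 1 := hb v
    have hv' : y v < (x + chiv u) v := hv.trans_le (le_add_of_nonneg_right (chiv_nonneg u v))
    refine ⟨x + chiv u - chiv v, finite_of_le hexch, ?_, ?_,
      (l1dist_sub_chiv_lt hv').trans (l1dist_add_chiv_lt hxu)⟩ <;>
      simp only [innerb_sub, innerb_add, innerb_chiv] <;> omega

theorem exists_innerb_eq (hg : MnatConvex g) (hb : ∀ e, b e = 0 ∨ b e = 1) {x y : E → ℤ}
    (hx : g x < ⊤) (hy : g y < ⊤) {k : ℤ} (hxk : innerb b x ≤ k) (hky : k ≤ innerb b y) :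
    ∃ w, g w < ⊤ ∧ innerb b w = k := by
  induction hn : l1dist x y using Nat.strong_induction_on generalizing x with
  | _ n ih =>
    rcases hxk.eq_or_lt with hxk | hxk
    · exact ⟨x, hx, hxk⟩
    obtain ⟨x', hx', hle, hle', hdist⟩ := hg.exists_step_toward hb hx hy (hxk.trans_le hky)
    exact ih _ (hn ▸ hdist) hx' (by omega) rfl

end MnatConvex

lemma Tset_nonempty_of_mem_dom {E : Type*} [Fintype E] {g : (E → ℤ) → WithTop ℝ}
    {b : E → ℤ} (hfin : {x : E → ℤ | g x < ⊤}.Finite) {w : E → ℤ} (hw : g w < ⊤) {k : ℤ}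
    (hwk : innerb b w = k) : (Tset g b k).Nonempty := by
  obtain ⟨m, ⟨hm, hmk⟩, hmin⟩ :=
    Set.exists_min_image {x | g x < ⊤ ∧ innerb b x = k} g (hfin.subset fun _ hx => hx.1)
      ⟨w, hw, hwk⟩
  exact ⟨m, hm, hmk, fun y hy hyk => hmin y ⟨hy, hyk⟩⟩

theorem stmt_0_general {E : Type*} [Fintype E] [DecidableEq E]
    (g : (E → ℤ) → WithTop ℝ) (b : E → ℤ)
    (hg : MnatConvex g)
    (hfin : {x : E → ℤ | g x < ⊤}.Finite)
    (hb : ∀ e : E, b e = 0 ∨ b e = 1)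
    (kmin kmax : ℤ)
    (hkmin : (Tset g b kmin).Nonempty ∧ ∀ k : ℤ, (Tset g b k).Nonempty → kmin ≤ k)
    (hkmax : (Tset g b kmax).Nonempty ∧ ∀ k : ℤ, (Tset g b k).Nonempty → k ≤ kmax) :
    ∀ k : ℤ, kmin ≤ k → k ≤ kmax → (Tset g b k).Nonempty := by
  intro k hk₁ hk₂
  obtain ⟨x, hx, rfl, -⟩ := hkmin.1
  obtain ⟨y, hy, rfl, -⟩ := hkmax.1
  obtain ⟨w, hw, hwk⟩ := hg.exists_innerb_eq hb hx hy hk₁ hk₂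
  exact Tset_nonempty_of_mem_dom hfin hw hwk

/-- for every `k` with `k̲ ≤ k ≤ k̄`, the set `𝒯_k` is nonempty. -/
theorem stmt_0 {E : Type*} [Fintype E] [DecidableEq E] [Nonempty E]
    (g : (E → ℤ) → WithTop ℝ) (b : E → ℤ)
    (hg : MnatConvex g)
    (hfin : {x : E → ℤ | g x < ⊤}.Finite)
    (hb : ∀ e : E, b e = 0 ∨ b e = 1)
    (kmin kmax : ℤ)
    (hkmin : (Tset g b kmin).Nonempty ∧ ∀ k : ℤ, (Tset g b k).Nonempty → kmin ≤ k)
    (hkmax : (Tset g b kmax).Nonempty ∧ ∀ k : ℤ, (Tset g b k).Nonempty → k ≤ kmax) :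
    ∀ k : ℤ, kmin ≤ k → k ≤ kmax → (Tset g b k).Nonempty :=
  stmt_0_general g b hg hfin hb kmin kmax hkmin hkmax
end

section
/- Let h be an M-convex function with finite nonempty effective domain and let b : E → {0,1}. Assume k̲ + 1 ≤ k̄, let i satisfy k̲ + 1 ≤ i ≤ k̄, let x ∈ 𝒮_i and x' ∈ 𝒮_{k̲}, and let (s,t) be a minimum transition with respect to x. Then there exists v ∈ E_0 with x'(v) > x(v) such that (s,v) is also a minimum transition with respect to x. -/
open scoped BigOperators

/-- M-convexity (with nonempty effective domain) for `h : (E → ℤ) → ℝ ∪ {+∞}`. -/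
def MConvex {E : Type*} [DecidableEq E] (h : (E → ℤ) → WithTop ℝ) : Prop :=
  (∃ x, h x < ⊤) ∧
  ∀ x y : E → ℤ, h x < ⊤ → h y < ⊤ → ∀ u : E, y u < x u →
    ∃ v : E, x v < y v ∧
      h (x - chiv u + chiv v) + h (y + chiv u - chiv v) ≤ h x + h y

/-- `𝒮_i`: the minimizers of `h` on `𝒬_i = {x ∈ dom h : ⟨b,x⟩ = i}`. -/
def Sset {E : Type*} [Fintype E] (h : (E → ℤ) → WithTop ℝ) (b : E → ℤ) (i : ℤ) :
    Set (E → ℤ) :=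
  {x | h x < ⊤ ∧ innerb b x = i ∧ ∀ y : E → ℤ, h y < ⊤ → innerb b y = i → h x ≤ h y}

/-- A transition `(u,v)` with respect to `x`: `u ∈ E₁`, `v ∈ E₀`, and
`x - χ_u + χ_v ∈ dom h`. -/
def IsTransitionM {E : Type*} [DecidableEq E] (h : (E → ℤ) → WithTop ℝ) (b : E → ℤ)
    (x : E → ℤ) (u v : E) : Prop :=
  b u = 1 ∧ b v = 0 ∧ h (x - chiv u + chiv v) < ⊤

/-- The cost `h(x;u,v) = h(x - χ_u + χ_v) - h(x)` of a transition. -/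
noncomputable def transCostM {E : Type*} [DecidableEq E] (h : (E → ℤ) → WithTop ℝ)
    (x : E → ℤ) (u v : E) : ℝ :=
  (h (x - chiv u + chiv v)).untopD 0 - (h x).untopD 0

/-- A minimum transition with respect to `x`. -/
def IsMinTransitionM {E : Type*} [Fintype E] [DecidableEq E] (h : (E → ℤ) → WithTop ℝ)
    (b : E → ℤ) (x : E → ℤ) (u v : E) : Prop :=
  IsTransitionM h b x u v ∧
    ∀ u' v' : E, IsTransitionM h b x u' v' →
      transCostM h x u v ≤ transCostM h x u' v'

/-!
If `x t < x' t`, take `v = t`. Otherwise `y := x - χ_s + χ_t` exceeds `x'` at `t`, and the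
exchange axiom for `(y, x', t)` yields `v` with `y v < x' v` and
`h(x - χ_s + χ_v) + h(x' + χ_t - χ_v) ≤ h(y) + h(x')`. The point `x' + χ_t - χ_v` lies on level
`k̲ - b v`; as no level below `k̲` has a minimizer, `b v = 0`, and then minimality of `x'` on
level `k̲` gives `h(x - χ_s + χ_v) ≤ h(y)`: the transition `(s,v)` costs no more than `(s,t)`.
-/

lemma innerb_add_chiv_sub_chiv {E : Type*} [Fintype E] [DecidableEq E] (b x : E → ℤ)
    (t v : E) : innerb b (x + chiv t - chiv v) = innerb b x + b t - b v := by
  simp [innerb, chiv, mul_add, mul_sub, Finset.sum_add_distrib, Finset.sum_sub_distrib]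

lemma Sset_nonempty_of_lt_top {E : Type*} [Fintype E] {h : (E → ℤ) → WithTop ℝ}
    (b : E → ℤ) (hfin : {x : E → ℤ | h x < ⊤}.Finite) {z : E → ℤ} (hz : h z < ⊤) :
    (Sset h b (innerb b z)).Nonempty := by
  obtain ⟨a, ⟨ha, hak⟩, hmin⟩ :=
    Set.exists_min_image {x | h x < ⊤ ∧ innerb b x = innerb b z} h
      (hfin.subset fun _ hw => hw.1) ⟨z, hz, rfl⟩
  exact ⟨a, ha, hak, fun y hy hyk => hmin y ⟨hy, hyk⟩⟩

lemma MConvex.exists_exchange_le_of_lowest_level {E : Type*} [Fintype E] [DecidableEq E]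
    {h : (E → ℤ) → WithTop ℝ} {b : E → ℤ} (hM : MConvex h)
    (hfin : {x : E → ℤ | h x < ⊤}.Finite) (hb : ∀ e, b e = 0 ∨ b e = 1) {kmin : ℤ}
    (hlowest : ∀ k, (Sset h b k).Nonempty → kmin ≤ k) {x' y : E → ℤ}
    (hx' : x' ∈ Sset h b kmin) (hy : h y < ⊤) {t : E} (hbt : b t = 0) (ht : x' t < y t) :
    ∃ v, b v = 0 ∧ y v < x' v ∧ h (y - chiv t + chiv v) ≤ h y := by
  obtain ⟨hx'dom, hx'k, hx'min⟩ := hx'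
  obtain ⟨v, hv, hexch⟩ := hM.2 y x' hy hx'dom t ht
  have hB : h (x' + chiv t - chiv v) < ⊤ :=
    (WithTop.add_lt_top.1 (hexch.trans_lt (WithTop.add_lt_top.2 ⟨hy, hx'dom⟩))).2
  have hlevel := innerb_add_chiv_sub_chiv b x' t v
  rw [hx'k, hbt] at hlevel
  have hbv : b v = 0 := by
    have := hlowest _ (Sset_nonempty_of_lt_top b hfin hB)
    rcases hb v with hbv | hbv <;> omega
  refine ⟨v, hbv, hv, (WithTop.add_le_add_iff_right hx'dom.ne).1 ?_⟩
  calc h (y - chiv t + chiv v) + h x'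
      ≤ h (y - chiv t + chiv v) + h (x' + chiv t - chiv v) :=
        add_le_add_right (hx'min _ hB (by rw [hlevel, hbv]; ring)) _
    _ ≤ h y + h x' := hexch

lemma transCostM_le_of_le {E : Type*} [DecidableEq E] {h : (E → ℤ) → WithTop ℝ}
    {x : E → ℤ} {s t v : E} (ht : h (x - chiv s + chiv t) < ⊤)
    (hle : h (x - chiv s + chiv v) ≤ h (x - chiv s + chiv t)) :
    transCostM h x s v ≤ transCostM h x s t := by
  unfold transCostM
  lift h (x - chiv s + chiv t) to ℝ using ht.ne with c
  lift h (x - chiv s + chiv v) to ℝ using ne_top_of_le_ne_top (by simp) hle with a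
  simpa using hle

lemma IsMinTransitionM.of_le {E : Type*} [Fintype E] [DecidableEq E]
    {h : (E → ℤ) → WithTop ℝ} {b : E → ℤ} {x : E → ℤ} {s t v : E}
    (hst : IsMinTransitionM h b x s t) (hbv : b v = 0)
    (hle : h (x - chiv s + chiv v) ≤ h (x - chiv s + chiv t)) :
    IsMinTransitionM h b x s v :=
  ⟨⟨hst.1.1, hbv, hle.trans_lt hst.1.2.2⟩, fun u' v' huv =>
    (transCostM_le_of_le hst.1.2.2 hle).trans (hst.2 u' v' huv)⟩

theorem stmt_10_general {E : Type*} [Fintype E] [DecidableEq E]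
    (h : (E → ℤ) → WithTop ℝ) (b : E → ℤ)
    (hM : MConvex h)
    (hfin : {x : E → ℤ | h x < ⊤}.Finite)
    (hb : ∀ e : E, b e = 0 ∨ b e = 1)
    (kmin : ℤ)
    (hkmin : (Sset h b kmin).Nonempty ∧ ∀ k : ℤ, (Sset h b k).Nonempty → kmin ≤ k)
    (x : E → ℤ)
    (x' : E → ℤ) (hx' : x' ∈ Sset h b kmin)
    (s t : E) (hst : IsMinTransitionM h b x s t) :
    ∃ v : E, b v = 0 ∧ x v < x' v ∧ IsMinTransitionM h b x s v := by
  obtain ⟨hbs, hbt, hdom⟩ := hst.1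
  by_cases hxt : x t < x' t
  · exact ⟨t, hbt, hxt, hst⟩
  have hts : t ≠ s := by rintro rfl; omega
  have hyt : x' t < (x - chiv s + chiv t) t := by simp only [Pi.add_apply, Pi.sub_apply, chiv, hts, ↓reduceIte]; omega
  obtain ⟨v, hbv, hyv, hle⟩ :=
    hM.exists_exchange_le_of_lowest_level hfin hb hkmin.2 hx' hdom hbt hyt
  have hvs : v ≠ s := by rintro rfl; omega
  have hvt : v ≠ t := by rintro rfl; omega
  refine ⟨v, hbv, by simpa [chiv, hvs, hvt] using hyv, hst.of_le hbv ?_⟩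
  simpa only [sub_add_add_cancel, add_sub_cancel_right] using hle

/-- if `(s,t)` is a minimum transition with respect to `x ∈ 𝒮_i`
and `x' ∈ 𝒮_{k̲}`, then there exists `v ∈ E₀` with `x'(v) > x(v)` such that `(s,v)`
is also a minimum transition with respect to `x`. -/
theorem stmt_10 {E : Type*} [Fintype E] [DecidableEq E] [Nonempty E]
    (h : (E → ℤ) → WithTop ℝ) (b : E → ℤ)
    (hM : MConvex h)
    (hfin : {x : E → ℤ | h x < ⊤}.Finite)
    (hb : ∀ e : E, b e = 0 ∨ b e = 1)
    (kmin kmax : ℤ)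
    (hkmin : (Sset h b kmin).Nonempty ∧ ∀ k : ℤ, (Sset h b k).Nonempty → kmin ≤ k)
    (hkmax : (Sset h b kmax).Nonempty ∧ ∀ k : ℤ, (Sset h b k).Nonempty → k ≤ kmax)
    (hgap : kmin + 1 ≤ kmax)
    (i : ℤ) (hi1 : kmin + 1 ≤ i) (hi2 : i ≤ kmax)
    (x : E → ℤ) (hx : x ∈ Sset h b i)
    (x' : E → ℤ) (hx' : x' ∈ Sset h b kmin)
    (s t : E) (hst : IsMinTransitionM h b x s t) :
    ∃ v : E, b v = 0 ∧ x v < x' v ∧ IsMinTransitionM h b x s v :=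
  stmt_10_general h b hM hfin hb kmin hkmin x x' hx' s t hst
end

section
/- Let E be a finite set partitioned into pairwise disjoint categories E_1, …, E_m with E = E_1 ∪ ⋯ ∪ E_m, and let λ, ξ ∈ ℤ^m satisfy 0 ≤ λ_i ≤ ξ_i for all i. Define I(λ,ξ) := {X ⊆ E : λ_i ≤ |E_i ∩ X| ≤ ξ_i for all i = 1, …, m}. If I(λ,ξ) is nonempty, then I(λ,ξ) satisfies the g-matroid exchange property (P): for any P₁, P₂ ∈ I(λ,ξ) and any v ∈ P₁ \ P₂, either (i) P₁ \ {v} ∈ I(λ,ξ) and P₂ ∪ {v} ∈ I(λ,ξ), or (ii) there exists u ∈ P₂ \ P₁ such that (P₁ \ {v}) ∪ {u} ∈ I(λ,ξ) and (P₂ ∪ {v}) \ {u} ∈ I(λ,ξ). -/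
open scoped BigOperators

/-- The family `I(λ,ξ)` of subsets `X ⊆ E` with `λ_i ≤ |E_i ∩ X| ≤ ξ_i` for every
category `i`. -/
def Ifam {E : Type*} [DecidableEq E] {m : ℕ} (C : Fin m → Finset E)
    (lam xi : Fin m → ℤ) : Set (Finset E) :=
  {X | ∀ i : Fin m, lam i ≤ ((C i ∩ X).card : ℤ) ∧ ((C i ∩ X).card : ℤ) ≤ xi i}

lemma inter_erase_of_not_mem {E : Type*} [DecidableEq E] (s t : Finset E) {v : E}
    (hv : v ∉ s) : s ∩ t.erase v = s ∩ t := by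
  ext x; simp only [Finset.mem_inter, Finset.mem_erase]
  constructor
  · rintro ⟨hx, _, ht⟩; exact ⟨hx, ht⟩
  · rintro ⟨hx, ht⟩; exact ⟨hx, fun h => hv (h ▸ hx), ht⟩

lemma inter_insert_of_not_mem {E : Type*} [DecidableEq E] (s t : Finset E) {v : E}
    (hv : v ∉ s) : s ∩ insert v t = s ∩ t := by
  ext x; simp only [Finset.mem_inter, Finset.mem_insert]
  constructor
  · rintro ⟨hx, h | ht⟩
    · exact absurd (h ▸ hx) hv
    · exact ⟨hx, ht⟩
  · rintro ⟨hx, ht⟩; exact ⟨hx, Or.inr ht⟩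

lemma inter_erase_eq {E : Type*} [DecidableEq E] (s t : Finset E) (v : E) :
    s ∩ t.erase v = (s ∩ t).erase v := by
  ext x; simp only [Finset.mem_inter, Finset.mem_erase]; tauto

lemma inter_insert_of_mem {E : Type*} [DecidableEq E] (s t : Finset E) {v : E}
    (hv : v ∈ s) : s ∩ insert v t = insert v (s ∩ t) := by
  ext x; simp only [Finset.mem_inter, Finset.mem_insert]
  constructor
  · rintro ⟨hx, h | ht⟩
    · exact Or.inl h
    · exact Or.inr ⟨hx, ht⟩
  · rintro (h | ⟨hx, ht⟩)
    · exact ⟨h ▸ hv, Or.inl h⟩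
    · exact ⟨hx, Or.inr ht⟩

/-- if nonempty, `I(λ,ξ)` satisfies the g-matroid exchange
property (P). -/
theorem stmt_12 {E : Type*} [Fintype E] [DecidableEq E] (m : ℕ)
    (C : Fin m → Finset E)
    (hdisj : ∀ i j : Fin m, i ≠ j → Disjoint (C i) (C j))
    (hcover : ∀ e : E, ∃ i : Fin m, e ∈ C i)
    (lam xi : Fin m → ℤ)
    (hlx : ∀ i : Fin m, 0 ≤ lam i ∧ lam i ≤ xi i)
    (hne : (Ifam C lam xi).Nonempty) :
    ∀ P₁ ∈ Ifam C lam xi, ∀ P₂ ∈ Ifam C lam xi, ∀ v ∈ P₁, v ∉ P₂ →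
      (P₁.erase v ∈ Ifam C lam xi ∧ insert v P₂ ∈ Ifam C lam xi) ∨
      (∃ u ∈ P₂, u ∉ P₁ ∧ insert u (P₁.erase v) ∈ Ifam C lam xi ∧
        (insert v P₂).erase u ∈ Ifam C lam xi) := by
  intro P₁ hP₁ P₂ hP₂ v hvP₁ hvP₂
  obtain ⟨i₀, hvi₀⟩ := hcover v
  have hvnot : ∀ j : Fin m, j ≠ i₀ → v ∉ C j := by
    intro j hj hvj
    simpa using (hdisj j i₀ hj).le_bot (by simp [hvj, hvi₀] : v ∈ C j ∩ C i₀)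
  have hv1 : v ∈ C i₀ ∩ P₁ := Finset.mem_inter.mpr ⟨hvi₀, hvP₁⟩
  -- card of C i₀ ∩ P₁.erase v
  have hcard_erase1 : (C i₀ ∩ P₁.erase v).card = (C i₀ ∩ P₁).card - 1 := by
    rw [inter_erase_eq, Finset.card_erase_of_mem hv1]
  have hcard1_pos : 1 ≤ (C i₀ ∩ P₁).card := Finset.card_pos.mpr ⟨v, hv1⟩
  by_cases hcase : lam i₀ ≤ ((C i₀ ∩ P₁).card : ℤ) - 1 ∧ ((C i₀ ∩ P₂).card : ℤ) + 1 ≤ xi i₀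
  · left
    constructor
    · intro i
      by_cases hi : i = i₀
      · subst hi
        rw [hcard_erase1]
        push_cast [hcard1_pos]
        exact ⟨hcase.1, by linarith [(hP₁ i).2]⟩
      · rw [inter_erase_of_not_mem _ _ (hvnot i hi)]
        exact hP₁ i
    · intro i
      by_cases hi : i = i₀
      · subst hi
        rw [inter_insert_of_mem _ _ hvi₀,
          Finset.card_insert_of_notMem (by simp [hvP₂])]
        push_cast
        exact ⟨by linarith [(hP₂ i).1], hcase.2⟩
      · rw [inter_insert_of_not_mem _ _ (hvnot i hi)]
        exact hP₂ i
  · right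
    -- there exists u ∈ C i₀ ∩ P₂ with u ∉ P₁
    have hkey : ((C i₀ ∩ P₁).card : ℤ) ≤ (C i₀ ∩ P₂).card := by
      rcases not_and_or.mp hcase with h | h
      · push_neg at h
        have := (hP₂ i₀).1
        linarith
      · push_neg at h
        have := (hP₁ i₀).2
        linarith
    have hexists : ∃ u ∈ C i₀ ∩ P₂, u ∉ P₁ := by
      by_contra hcon
      push_neg at hcon
      have hsub : C i₀ ∩ P₂ ⊆ (C i₀ ∩ P₁).erase v := by
        intro x hx
        rw [Finset.mem_erase]
        refine ⟨fun hxv => hvP₂ (hxv ▸ (Finset.mem_inter.mp hx).2), ?_⟩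
        exact Finset.mem_inter.mpr ⟨(Finset.mem_inter.mp hx).1, hcon x hx⟩
      have := Finset.card_le_card hsub
      rw [Finset.card_erase_of_mem hv1] at this
      have : ((C i₀ ∩ P₂).card : ℤ) ≤ (C i₀ ∩ P₁).card - 1 := by
        push_cast [hcard1_pos] at this ⊢
        omega
      linarith
    obtain ⟨u, huC, huP₁⟩ := hexists
    obtain ⟨hui₀, huP₂⟩ := Finset.mem_inter.mp huC
    have hunot : ∀ j : Fin m, j ≠ i₀ → u ∉ C j := by
      intro j hj huj
      simpa using (hdisj j i₀ hj).le_bot (by simp [huj, hui₀] : u ∈ C j ∩ C i₀)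
    have huv : u ≠ v := fun h => hvP₂ (h ▸ huP₂)
    refine ⟨u, huP₂, huP₁, ?_, ?_⟩
    · intro i
      by_cases hi : i = i₀
      · subst hi
        have huer : u ∉ P₁.erase v := fun h => huP₁ (Finset.mem_of_mem_erase h)
        rw [inter_insert_of_mem _ _ hui₀,
          Finset.card_insert_of_notMem (by simp [huer]),
          hcard_erase1]
        have : (C i ∩ P₁).card - 1 + 1 = (C i ∩ P₁).card := by omega
        rw [this]
        exact hP₁ i
      · rw [inter_insert_of_not_mem _ _ (hunot i hi),
          inter_erase_of_not_mem _ _ (hvnot i hi)]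
        exact hP₁ i
    · intro i
      by_cases hi : i = i₀
      · subst hi
        have hu_ins : u ∈ C i ∩ insert v P₂ :=
          Finset.mem_inter.mpr ⟨hui₀, Finset.mem_insert_of_mem huP₂⟩
        rw [inter_erase_eq, Finset.card_erase_of_mem hu_ins,
          inter_insert_of_mem _ _ hvi₀,
          Finset.card_insert_of_notMem (by simp [hvP₂])]
        have : (C i ∩ P₂).card + 1 - 1 = (C i ∩ P₂).card := by omega
        rw [this]
        exact hP₂ i
      · rw [inter_erase_of_not_mem _ _ (hunot i hi),
          inter_insert_of_not_mem _ _ (hvnot i hi)]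
        exact hP₂ i
end
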